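/- Take I = {1, 2} with pairings ⟨α_1, h_1⟩ = ⟨α_2, h_2⟩ = 2, ⟨α_2, h_1⟩ = −2 and ⟨α_1, h_2⟩ = −1 (type C_2), and the sequence i_k = 1 for k odd, i_k = 2 for k even. Let a ∈ ℤ^∞ have a_k = 0 for k > 4, with a_1, a_2, a_3, a_4 ≥ 0, 2a_2 ≥ a_3 and a_3 ≥ 2a_4. Then the quadruple (ε_2(a), ε_1(ẽ_2^{max} a), ε_2(ẽ_1^{max} ẽ_2^{max} a), ε_1(ẽ_2^{max} ẽ_1^{max} ẽ_2^{max} a)) equals (max{a_4, a_2 − a_3 + 2a_4}, max{a_3, a_1 − 2a_2 + 2a_3, a_1 + 2a_4}, min{a_2, a_3 − a_4}, min{a_1, 2a_2 − a_3, a_3 − 2a_4}). -/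
import Mathlib


/-- `σ_k(a) := a_k + Σ_{j > k} ⟨α_{i_j}, h_{i_k}⟩ a_j` for the crystal `ℤ^∞` associated to the
sequence `ι = (i_k)` and the generalized Cartan matrix `C` (where `C i j = ⟨α_j, h_i⟩`). -/
noncomputable def sigZ {I : Type*} (C : I → I → ℤ) (ι : ℕ → I) (a : ℕ → ℤ) (k : ℕ) : ℤ :=
  a k + ∑ᶠ (j : ℕ) (_ : k < j), C (ι k) (ι j) * a j

/-- `ε_i(a) = σ^{(i)}(a) := max {σ_k(a) : i_k = i}`. -/
noncomputable def sigMax {I : Type*} (C : I → I → ℤ) (ι : ℕ → I) (a : ℕ → ℤ) (i : I) : ℤ :=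
  sSup {x : ℤ | ∃ k : ℕ, ι k = i ∧ sigZ C ι a k = x}

/-- `M^{(i)}(a) := {k : i_k = i, σ_k(a) = σ^{(i)}(a)}`. -/
noncomputable def Mset {I : Type*} (C : I → I → ℤ) (ι : ℕ → I) (a : ℕ → ℤ) (i : I) : Set ℕ :=
  {k : ℕ | ι k = i ∧ sigZ C ι a k = sigMax C ι a i}

/-- The Kashiwara operator `ẽ_i` on `ℤ^∞`: subtract `1` from the entry in position
`max M^{(i)}(a)` (relevant when `σ^{(i)}(a) > 0`). -/
noncomputable def etilde {I : Type*} (C : I → I → ℤ) (ι : ℕ → I) (i : I) (a : ℕ → ℤ) :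
    ℕ → ℤ :=
  fun k => a k - if k = sSup (Mset C ι a i) then 1 else 0

/-- `ẽ_i^{max} a := ẽ_i^{ε_i(a)} a`. -/
noncomputable def emax {I : Type*} (C : I → I → ℤ) (ι : ℕ → I) (i : I) (a : ℕ → ℤ) :
    ℕ → ℤ :=
  (etilde C ι i)^[(sigMax C ι a i).toNat] a

/-- The Cartan matrix of type `C_2`: `C i j = ⟨α_j, h_i⟩`, with
`⟨α_1, h_1⟩ = ⟨α_2, h_2⟩ = 2`, `⟨α_2, h_1⟩ = -2` and `⟨α_1, h_2⟩ = -1`; the index `1` is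
`(0 : Fin 2)` and `2` is `(1 : Fin 2)`. -/
def CartanC2 : Fin 2 → Fin 2 → ℤ := fun i j => if i = j then 2 else if i = 0 then -2 else -1

/-- The alternating sequence `(i_1, i_2, i_3, …) = (1, 2, 1, 2, …)`, indexed here from `0`
(position `k ≥ 1` of the paper is index `k - 1`). -/
def iotaAlt : ℕ → Fin 2 := fun k => if k % 2 = 0 then 0 else 1

def quadZ (x0 x1 x2 x3 : ℤ) : ℕ → ℤ :=
  fun k => if k = 0 then x0 else if k = 1 then x1 else if k = 2 then x2 else
    if k = 3 then x3 else 0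

lemma quadZ_big (x0 x1 x2 x3 : ℤ) (j : ℕ) (hj : 4 ≤ j) : quadZ x0 x1 x2 x3 j = 0 := by
  unfold quadZ
  rw [if_neg (by omega), if_neg (by omega), if_neg (by omega), if_neg (by omega)]

lemma sigZ_quad (x0 x1 x2 x3 : ℤ) (k : ℕ) :
    sigZ CartanC2 iotaAlt (quadZ x0 x1 x2 x3) k =
      quadZ x0 x1 x2 x3 k + ∑ j ∈ Finset.range 4,
        (if k < j then CartanC2 (iotaAlt k) (iotaAlt j) * quadZ x0 x1 x2 x3 j else 0) := by
  classical
  unfold sigZ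
  congr 1
  rw [finsum_congr (fun j => finsum_eq_if (p := k < j)
    (x := CartanC2 (iotaAlt k) (iotaAlt j) * quadZ x0 x1 x2 x3 j))]
  apply finsum_eq_sum_of_support_subset
  intro j hj
  simp only [Function.mem_support, ne_eq] at hj
  simp only [Finset.coe_range, Set.mem_Iio]
  by_contra hc
  push_neg at hc
  apply hj
  rw [quadZ_big _ _ _ _ _ hc, mul_zero]
  simp

lemma sigZ_quad_zero (x0 x1 x2 x3 : ℤ) :
    sigZ CartanC2 iotaAlt (quadZ x0 x1 x2 x3) 0 = x0 - 2*x1 + 2*x2 - 2*x3 := by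
  rw [sigZ_quad]
  norm_num [Finset.sum_range_succ, quadZ, CartanC2, iotaAlt]
  ring

lemma sigZ_quad_one (x0 x1 x2 x3 : ℤ) :
    sigZ CartanC2 iotaAlt (quadZ x0 x1 x2 x3) 1 = x1 - x2 + 2*x3 := by
  rw [sigZ_quad]
  norm_num [Finset.sum_range_succ, quadZ, CartanC2, iotaAlt]
  ring

lemma sigZ_quad_two (x0 x1 x2 x3 : ℤ) :
    sigZ CartanC2 iotaAlt (quadZ x0 x1 x2 x3) 2 = x2 - 2*x3 := by
  rw [sigZ_quad]
  norm_num [Finset.sum_range_succ, quadZ, CartanC2, iotaAlt]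
  ring

lemma sigZ_quad_three (x0 x1 x2 x3 : ℤ) :
    sigZ CartanC2 iotaAlt (quadZ x0 x1 x2 x3) 3 = x3 := by
  rw [sigZ_quad]
  norm_num [Finset.sum_range_succ, quadZ, CartanC2, iotaAlt]

lemma sigZ_quad_big (x0 x1 x2 x3 : ℤ) (k : ℕ) (hk : 4 ≤ k) :
    sigZ CartanC2 iotaAlt (quadZ x0 x1 x2 x3) k = 0 := by
  rw [sigZ_quad, quadZ_big _ _ _ _ _ hk]
  rw [Finset.sum_eq_zero]
  · ring
  intro j hj
  simp only [Finset.mem_range] at hj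
  rw [if_neg (by omega)]

lemma iota0 : iotaAlt 0 = 0 := rfl
lemma iota1 : iotaAlt 1 = 1 := rfl
lemma iota2 : iotaAlt 2 = 0 := rfl
lemma iota3 : iotaAlt 3 = 1 := rfl
lemma iota4 : iotaAlt 4 = 0 := rfl
lemma iota5 : iotaAlt 5 = 1 := rfl

lemma sigMax_quad_one (x0 x1 x2 x3 : ℤ) :
    sigMax CartanC2 iotaAlt (quadZ x0 x1 x2 x3) 1 =
      max x3 (max (x1 - x2 + 2*x3) 0) := by
  apply IsGreatest.csSup_eq
  constructor
  · by_cases hA : max (x1 - x2 + 2*x3) 0 ≤ x3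
    · exact ⟨3, iota3, by rw [sigZ_quad_three]; omega⟩
    · by_cases hB : (0:ℤ) ≤ x1 - x2 + 2*x3
      · exact ⟨1, iota1, by rw [sigZ_quad_one]; omega⟩
      · exact ⟨5, iota5, by rw [sigZ_quad_big _ _ _ _ 5 (by omega)]; omega⟩
  · rintro x ⟨k, hk, rfl⟩
    match k with
    | 0 => exact absurd hk (by decide)
    | 1 => rw [sigZ_quad_one]; omega
    | 2 => exact absurd hk (by decide)
    | 3 => rw [sigZ_quad_three]; omega
    | (n+4) => rw [sigZ_quad_big _ _ _ _ _ (by omega)]; omega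

lemma sigMax_quad_zero (x0 x1 x2 x3 : ℤ) :
    sigMax CartanC2 iotaAlt (quadZ x0 x1 x2 x3) 0 =
      max (x0 - 2*x1 + 2*x2 - 2*x3) (max (x2 - 2*x3) 0) := by
  apply IsGreatest.csSup_eq
  constructor
  · by_cases hA : max (x2 - 2*x3) 0 ≤ x0 - 2*x1 + 2*x2 - 2*x3
    · exact ⟨0, iota0, by rw [sigZ_quad_zero]; omega⟩
    · by_cases hB : (0:ℤ) ≤ x2 - 2*x3
      · exact ⟨2, iota2, by rw [sigZ_quad_two]; omega⟩
      · exact ⟨4, iota4, by rw [sigZ_quad_big _ _ _ _ 4 (by omega)]; omega⟩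
  · rintro x ⟨k, hk, rfl⟩
    match k with
    | 0 => rw [sigZ_quad_zero]; omega
    | 1 => exact absurd hk (by decide)
    | 2 => rw [sigZ_quad_two]; omega
    | 3 => exact absurd hk (by decide)
    | (n+4) => rw [sigZ_quad_big _ _ _ _ _ (by omega)]; omega

lemma sSup_Mset_one_three (x0 x1 x2 x3 : ℤ)
    (hpos : 0 < sigMax CartanC2 iotaAlt (quadZ x0 x1 x2 x3) 1)
    (h3 : sigZ CartanC2 iotaAlt (quadZ x0 x1 x2 x3) 3
        = sigMax CartanC2 iotaAlt (quadZ x0 x1 x2 x3) 1) :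
    sSup (Mset CartanC2 iotaAlt (quadZ x0 x1 x2 x3) 1) = 3 := by
  apply IsGreatest.csSup_eq
  refine ⟨⟨iota3, h3⟩, ?_⟩
  rintro k ⟨hk, hs⟩
  match k with
  | 0 => exact absurd hk (by decide)
  | 1 => omega
  | 2 => exact absurd hk (by decide)
  | 3 => omega
  | (n+4) => rw [sigZ_quad_big _ _ _ _ _ (by omega)] at hs; omega

lemma sSup_Mset_one_one (x0 x1 x2 x3 : ℤ)
    (hpos : 0 < sigMax CartanC2 iotaAlt (quadZ x0 x1 x2 x3) 1)
    (h3 : sigZ CartanC2 iotaAlt (quadZ x0 x1 x2 x3) 3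
        ≠ sigMax CartanC2 iotaAlt (quadZ x0 x1 x2 x3) 1)
    (h1 : sigZ CartanC2 iotaAlt (quadZ x0 x1 x2 x3) 1
        = sigMax CartanC2 iotaAlt (quadZ x0 x1 x2 x3) 1) :
    sSup (Mset CartanC2 iotaAlt (quadZ x0 x1 x2 x3) 1) = 1 := by
  apply IsGreatest.csSup_eq
  refine ⟨⟨iota1, h1⟩, ?_⟩
  rintro k ⟨hk, hs⟩
  match k with
  | 0 => exact absurd hk (by decide)
  | 1 => omega
  | 2 => exact absurd hk (by decide)
  | 3 => exact absurd hs h3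
  | (n+4) => rw [sigZ_quad_big _ _ _ _ _ (by omega)] at hs; omega

lemma sSup_Mset_zero_two (x0 x1 x2 x3 : ℤ)
    (hpos : 0 < sigMax CartanC2 iotaAlt (quadZ x0 x1 x2 x3) 0)
    (h2 : sigZ CartanC2 iotaAlt (quadZ x0 x1 x2 x3) 2
        = sigMax CartanC2 iotaAlt (quadZ x0 x1 x2 x3) 0) :
    sSup (Mset CartanC2 iotaAlt (quadZ x0 x1 x2 x3) 0) = 2 := by
  apply IsGreatest.csSup_eq
  refine ⟨⟨iota2, h2⟩, ?_⟩
  rintro k ⟨hk, hs⟩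
  match k with
  | 0 => omega
  | 1 => exact absurd hk (by decide)
  | 2 => omega
  | 3 => exact absurd hk (by decide)
  | (n+4) => rw [sigZ_quad_big _ _ _ _ _ (by omega)] at hs; omega

lemma sSup_Mset_zero_zero (x0 x1 x2 x3 : ℤ)
    (hpos : 0 < sigMax CartanC2 iotaAlt (quadZ x0 x1 x2 x3) 0)
    (h2 : sigZ CartanC2 iotaAlt (quadZ x0 x1 x2 x3) 2
        ≠ sigMax CartanC2 iotaAlt (quadZ x0 x1 x2 x3) 0)
    (h0 : sigZ CartanC2 iotaAlt (quadZ x0 x1 x2 x3) 0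
        = sigMax CartanC2 iotaAlt (quadZ x0 x1 x2 x3) 0) :
    sSup (Mset CartanC2 iotaAlt (quadZ x0 x1 x2 x3) 0) = 0 := by
  apply IsGreatest.csSup_eq
  refine ⟨⟨iota0, h0⟩, ?_⟩
  rintro k ⟨hk, hs⟩
  match k with
  | 0 => omega
  | 1 => exact absurd hk (by decide)
  | 2 => exact absurd hs h2
  | 3 => exact absurd hk (by decide)
  | (n+4) => rw [sigZ_quad_big _ _ _ _ _ (by omega)] at hs; omega


lemma etilde_quad (x0 x1 x2 x3 : ℤ) (i : Fin 2) (p : ℕ) (hp4 : p < 4)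
    (hp : sSup (Mset CartanC2 iotaAlt (quadZ x0 x1 x2 x3) i) = p) :
    etilde CartanC2 iotaAlt i (quadZ x0 x1 x2 x3) =
      quadZ (x0 - if p = 0 then 1 else 0) (x1 - if p = 1 then 1 else 0)
        (x2 - if p = 2 then 1 else 0) (x3 - if p = 3 then 1 else 0) := by
  funext k
  simp only [etilde, hp]
  match k with
  | 0 => simp [quadZ, eq_comm]
  | 1 => simp [quadZ, eq_comm]
  | 2 => simp [quadZ, eq_comm]
  | 3 => simp [quadZ, eq_comm]
  | (n+4) =>
    rw [quadZ_big _ _ _ _ _ (by omega), quadZ_big _ _ _ _ _ (by omega),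
      if_neg (by omega)]
    ring

lemma stageA (n : ℕ) : ∀ x0 x1 x2 x3 : ℤ, 0 ≤ x3 →
    (max x3 (max (x1 - x2 + 2*x3) 0)).toNat = n →
    (etilde CartanC2 iotaAlt 1)^[n] (quadZ x0 x1 x2 x3)
      = quadZ x0 (min x1 (x2 - x3)) x2 0 := by
  induction n with
  | zero =>
    intro x0 x1 x2 x3 h3 hn
    simp only [Function.iterate_zero, id]
    have e2 : min x1 (x2 - x3) = x1 := by omega
    have e3 : x3 = 0 := by omega
    rw [e2, ← e3]
  | succ n ih =>
    intro x0 x1 x2 x3 h3 hn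
    rw [Function.iterate_succ_apply]
    have hmax : sigMax CartanC2 iotaAlt (quadZ x0 x1 x2 x3) 1
        = max x3 (max (x1 - x2 + 2*x3) 0) := sigMax_quad_one x0 x1 x2 x3
    have hpos : 0 < sigMax CartanC2 iotaAlt (quadZ x0 x1 x2 x3) 1 := by
      rw [hmax]; omega
    by_cases hc : x1 - x2 + x3 ≤ 0
    · -- σ₁ ≤ σ₃, act at position 3
      have hsup : sSup (Mset CartanC2 iotaAlt (quadZ x0 x1 x2 x3) 1) = 3 :=
        sSup_Mset_one_three x0 x1 x2 x3 hpos
          (by rw [sigZ_quad_three, hmax]; omega)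
      have he : etilde CartanC2 iotaAlt 1 (quadZ x0 x1 x2 x3)
          = quadZ x0 x1 x2 (x3 - 1) := by
        rw [etilde_quad x0 x1 x2 x3 1 3 (by omega) hsup]; norm_num
      rw [he, ih x0 x1 x2 (x3 - 1) (by omega) (by omega)]
      have : min x1 (x2 - (x3 - 1)) = min x1 (x2 - x3) := by omega
      rw [this]
    · -- σ₁ > σ₃, act at position 1
      have hsup : sSup (Mset CartanC2 iotaAlt (quadZ x0 x1 x2 x3) 1) = 1 :=
        sSup_Mset_one_one x0 x1 x2 x3 hpos
          (by rw [sigZ_quad_three, hmax]; omega)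
          (by rw [sigZ_quad_one, hmax]; omega)
      have he : etilde CartanC2 iotaAlt 1 (quadZ x0 x1 x2 x3)
          = quadZ x0 (x1 - 1) x2 x3 := by
        rw [etilde_quad x0 x1 x2 x3 1 1 (by omega) hsup]; norm_num
      rw [he, ih x0 (x1 - 1) x2 x3 h3 (by omega)]
      have : min (x1 - 1) (x2 - x3) = min x1 (x2 - x3) := by omega
      rw [this]

lemma stageB (n : ℕ) : ∀ x0 x1 x2 x3 : ℤ, 0 ≤ x2 - 2*x3 →
    (max (x0 - 2*x1 + 2*x2 - 2*x3) (max (x2 - 2*x3) 0)).toNat = n →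
    (etilde CartanC2 iotaAlt 0)^[n] (quadZ x0 x1 x2 x3)
      = quadZ (min x0 (2*x1 - x2)) x1 (2*x3) x3 := by
  induction n with
  | zero =>
    intro x0 x1 x2 x3 h2 hn
    simp only [Function.iterate_zero, id]
    have e0 : min x0 (2*x1 - x2) = x0 := by omega
    have e2 : x2 = 2*x3 := by omega
    rw [e0, ← e2]
  | succ n ih =>
    intro x0 x1 x2 x3 h2 hn
    rw [Function.iterate_succ_apply]
    have hmax : sigMax CartanC2 iotaAlt (quadZ x0 x1 x2 x3) 0
        = max (x0 - 2*x1 + 2*x2 - 2*x3) (max (x2 - 2*x3) 0) := sigMax_quad_zero x0 x1 x2 x3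
    have hpos : 0 < sigMax CartanC2 iotaAlt (quadZ x0 x1 x2 x3) 0 := by
      rw [hmax]; omega
    by_cases hc : x0 - 2*x1 + x2 ≤ 0
    · -- σ₀ ≤ σ₂, act at position 2
      have hsup : sSup (Mset CartanC2 iotaAlt (quadZ x0 x1 x2 x3) 0) = 2 :=
        sSup_Mset_zero_two x0 x1 x2 x3 hpos
          (by rw [sigZ_quad_two, hmax]; omega)
      have he : etilde CartanC2 iotaAlt 0 (quadZ x0 x1 x2 x3)
          = quadZ x0 x1 (x2 - 1) x3 := by
        rw [etilde_quad x0 x1 x2 x3 0 2 (by omega) hsup]; norm_num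
      rw [he, ih x0 x1 (x2 - 1) x3 (by omega) (by omega)]
      have : min x0 (2*x1 - (x2 - 1)) = min x0 (2*x1 - x2) := by omega
      rw [this]
    · -- σ₀ > σ₂, act at position 0
      have hsup : sSup (Mset CartanC2 iotaAlt (quadZ x0 x1 x2 x3) 0) = 0 :=
        sSup_Mset_zero_zero x0 x1 x2 x3 hpos
          (by rw [sigZ_quad_two, hmax]; omega)
          (by rw [sigZ_quad_zero, hmax]; omega)
      have he : etilde CartanC2 iotaAlt 0 (quadZ x0 x1 x2 x3)
          = quadZ (x0 - 1) x1 x2 x3 := by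
        rw [etilde_quad x0 x1 x2 x3 0 0 (by omega) hsup]; norm_num
      rw [he, ih (x0 - 1) x1 x2 x3 h2 (by omega)]
      have : min (x0 - 1) (2*x1 - x2) = min x0 (2*x1 - x2) := by omega
      rw [this]

lemma emax_one_quad (x0 x1 x2 x3 : ℤ) (h3 : 0 ≤ x3) :
    emax CartanC2 iotaAlt 1 (quadZ x0 x1 x2 x3) = quadZ x0 (min x1 (x2 - x3)) x2 0 := by
  unfold emax
  rw [sigMax_quad_one]
  exact stageA _ x0 x1 x2 x3 h3 rfl

lemma emax_zero_quad (x0 x1 x2 : ℤ) (h2 : 0 ≤ x2) :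
    emax CartanC2 iotaAlt 0 (quadZ x0 x1 x2 0) = quadZ (min x0 (2*x1 - x2)) x1 0 0 := by
  unfold emax
  rw [sigMax_quad_zero]
  have h := stageB _ x0 x1 x2 0 (by omega) rfl
  rw [h]; norm_num

lemma main_quad (x0 x1 x2 x3 : ℤ)
    (h0 : 0 ≤ x0) (h1 : 0 ≤ x1) (h2 : 0 ≤ x2) (h3 : 0 ≤ x3)
    (h23 : x2 ≤ 2*x1) (h34 : 2*x3 ≤ x2) :
    (sigMax CartanC2 iotaAlt (quadZ x0 x1 x2 x3) 1,
     sigMax CartanC2 iotaAlt (emax CartanC2 iotaAlt 1 (quadZ x0 x1 x2 x3)) 0,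
     sigMax CartanC2 iotaAlt
       (emax CartanC2 iotaAlt 0 (emax CartanC2 iotaAlt 1 (quadZ x0 x1 x2 x3))) 1,
     sigMax CartanC2 iotaAlt
       (emax CartanC2 iotaAlt 1 (emax CartanC2 iotaAlt 0
         (emax CartanC2 iotaAlt 1 (quadZ x0 x1 x2 x3)))) 0)
    = (max x3 (x1 - x2 + 2*x3),
       max x2 (max (x0 - 2*x1 + 2*x2) (x0 + 2*x3)),
       min x1 (x2 - x3),
       min x0 (min (2*x1 - x2) (x2 - 2*x3))) := by
  rw [emax_one_quad x0 x1 x2 x3 h3,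
    emax_zero_quad x0 (min x1 (x2 - x3)) x2 h2,
    emax_one_quad (min x0 (2 * min x1 (x2 - x3) - x2)) (min x1 (x2 - x3)) 0 0 le_rfl]
  simp only [sigMax_quad_one, sigMax_quad_zero, Prod.mk.injEq]
  refine ⟨by omega, by omega, by omega, by omega⟩


/-- Type `C_2`, sequence `(1, 2, 1, 2, …)`.  Let `a ∈ ℤ^∞` be supported on
the first four entries `(a_1, a_2, a_3, a_4) = (a 0, a 1, a 2, a 3)`, with nonnegative entries,
`2 a_2 ≥ a_3` and `a_3 ≥ 2 a_4`.  Then the quadruple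
`(ε_2(a), ε_1(ẽ_2^{max} a), ε_2(ẽ_1^{max} ẽ_2^{max} a), ε_1(ẽ_2^{max} ẽ_1^{max} ẽ_2^{max} a))`
equals `(max {a_4, a_2 - a_3 + 2 a_4}, max {a_3, a_1 - 2 a_2 + 2 a_3, a_1 + 2 a_4},
min {a_2, a_3 - a_4}, min {a_1, 2 a_2 - a_3, a_3 - 2 a_4})`. -/
theorem stmt_13 (a : ℕ → ℤ)
    (h1 : 0 ≤ a 0) (h2 : 0 ≤ a 1) (h3 : 0 ≤ a 2) (h4 : 0 ≤ a 3)
    (h23 : a 2 ≤ 2 * a 1) (h34 : 2 * a 3 ≤ a 2)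
    (hsupp : ∀ k : ℕ, 4 ≤ k → a k = 0) :
    (sigMax CartanC2 iotaAlt a 1,
     sigMax CartanC2 iotaAlt (emax CartanC2 iotaAlt 1 a) 0,
     sigMax CartanC2 iotaAlt (emax CartanC2 iotaAlt 0 (emax CartanC2 iotaAlt 1 a)) 1,
     sigMax CartanC2 iotaAlt
       (emax CartanC2 iotaAlt 1 (emax CartanC2 iotaAlt 0 (emax CartanC2 iotaAlt 1 a))) 0)
    = (max (a 3) (a 1 - a 2 + 2 * a 3),
       max (a 2) (max (a 0 - 2 * a 1 + 2 * a 2) (a 0 + 2 * a 3)),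
       min (a 1) (a 2 - a 3),
       min (a 0) (min (2 * a 1 - a 2) (a 2 - 2 * a 3))) := by
  have ha : a = quadZ (a 0) (a 1) (a 2) (a 3) := by
    funext k
    match k with
    | 0 => simp [quadZ]
    | 1 => simp [quadZ]
    | 2 => simp [quadZ]
    | 3 => simp [quadZ]
    | (n+4) => rw [quadZ_big _ _ _ _ _ (by omega)]; exact hsupp _ (by omega)
  have key := main_quad (a 0) (a 1) (a 2) (a 3) h1 h2 h3 h4 h23 h34
  rw [← ha] at key
  exact key
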